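/- Let R be a nontrivial commutative unitary ring with only finitely many ideals. If the total number of ideals of R is a prime number, then R is a local ring, i.e., R has exactly one maximal ideal. -/

import Mathlib

open Ideal in
private lemma aux_inf_eq_prod {R : Type*} [CommRing R] {ι : Type*} [DecidableEq ι]
    (s : Finset ι) (J : ι → Ideal R) (h : Set.Pairwise s (Function.onFun IsCoprime J)) :
    ⨅ j ∈ s, J j = ∏ j ∈ s, J j := by
  induction s using Finset.induction with
  | empty => simp
  | @insert i s hi ih =>
    have hsub : (s : Set ι) ⊆ ((insert i s : Finset ι) : Set ι) := by
      intro x hx; simp only [Finset.coe_insert, Set.mem_insert_iff]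
      exact Or.inr hx
    have hcop : IsCoprime (J i) (⨅ j ∈ s, J j) :=
      isCoprime_biInf fun j hj =>
        h (by simp) (by simp [hj]) (fun e => hi (e ▸ hj))
    rw [Finset.iInf_insert, inf_eq_mul_of_isCoprime hcop, ih (h.mono hsub),
      Finset.prod_insert hi]

/-- A nontrivial commutative unitary ring with finitely many ideals,
whose total number of ideals is prime, is a local ring (exactly one maximal ideal). -/
theorem local_of_prime_card_ideals {R : Type*} [CommRing R] [Nontrivial R]
    (h : Finite (Ideal R)) (hp : (Nat.card (Ideal R)).Prime) :
    ∃! M : Ideal R, M.IsMaximal := by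
  classical
  obtain ⟨M, hM⟩ := Ideal.exists_maximal R
  refine ⟨M, hM, fun N hN => ?_⟩
  by_contra hne
  haveI hfin : Finite (Submodule R R) := h
  haveI hart : IsArtinianRing R := inferInstance
  obtain ⟨n, hn⟩ := IsArtinianRing.isNilpotent_jacobson_bot (R := R)
  have hn0 : n ≠ 0 := by
    rintro rfl
    simp only [pow_zero, Ideal.one_eq_top] at hn
    exact top_ne_bot hn
  set S := {I : Ideal R | I.IsMaximal} with hS
  haveI hSfin : Finite S := Subtype.finite
  haveI : Fintype S := Fintype.ofFinite S
  -- pairwise coprimality of the powers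
  have hcop : Pairwise (Function.onFun IsCoprime fun I : S => (I : Ideal R) ^ n) := by
    intro I J hIJ
    exact (Ideal.isCoprime_iff_sup_eq.mpr
      (I.2.coprime_of_ne J.2 (fun e => hIJ (Subtype.ext e)))).pow
  -- the Jacobson radical is the infimum of maximal ideals
  have hjac : Ideal.jacobson (⊥ : Ideal R) = ⨅ I : S, (I : Ideal R) := by
    rw [Ideal.jacobson, sInf_eq_iInf']
    have : {J : Ideal R | ⊥ ≤ J ∧ J.IsMaximal} = S := by
      ext J; simp [hS]
    rw [this]
  -- the infimum of the n-th powers of maximal ideals is ⊥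
  have hinf : ⨅ I : S, (I : Ideal R) ^ n = ⊥ := by
    refine le_bot_iff.mp ?_
    calc ⨅ I : S, (I : Ideal R) ^ n
        = ⨅ I ∈ (Finset.univ : Finset S), (I : Ideal R) ^ n := by simp
      _ = ∏ I ∈ (Finset.univ : Finset S), (I : Ideal R) ^ n :=
          aux_inf_eq_prod _ _ (hcop.set_pairwise _)
      _ = (∏ I ∈ (Finset.univ : Finset S), (I : Ideal R)) ^ n := by
          rw [Finset.prod_pow]
      _ ≤ (⨅ I : S, (I : Ideal R)) ^ n := by
          refine Ideal.pow_right_mono ?_ n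
          refine le_iInf fun I => ?_
          exact le_trans Ideal.prod_le_inf (Finset.inf_le (Finset.mem_univ I))
      _ = (Ideal.jacobson (⊥ : Ideal R)) ^ n := by rw [hjac]
      _ = ⊥ := hn
  -- Chinese remainder decomposition
  let e : R ≃+* ∀ I : S, R ⧸ ((I : Ideal R) ^ n) :=
    (RingEquiv.quotientBot R).symm.trans
      ((Ideal.quotEquivOfEq hinf.symm).trans
        (Ideal.quotientInfRingEquivPiQuotient _ hcop))
  set m : S := ⟨M, hM⟩ with hm
  let e2 : (∀ I : S, R ⧸ ((I : Ideal R) ^ n)) ≃+*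
      ((∀ i : {x : S // x = m}, R ⧸ ((i.1 : Ideal R) ^ n)) ×
        ∀ i : {x : S // ¬ x = m}, R ⧸ ((i.1 : Ideal R) ^ n)) :=
    RingEquiv.piEquivPiSubtypeProd (fun x : S => x = m) _
  -- quotients are nontrivial
  haveI hQ : ∀ I : S, Nontrivial (R ⧸ ((I : Ideal R) ^ n)) := by
    intro I
    refine Ideal.Quotient.nontrivial_iff.mpr ?_
    intro htop
    exact I.2.ne_top (top_le_iff.mp (htop ▸ Ideal.pow_le_self hn0))
  haveI : Nonempty {x : S // x = m} := ⟨⟨m, rfl⟩⟩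
  haveI : Nonempty {x : S // ¬ x = m} :=
    ⟨⟨⟨N, hN⟩, fun e => hne (congrArg Subtype.val e)⟩⟩
  haveI : Inhabited {x : S // x = m} := Classical.inhabited_of_nonempty ‹_›
  haveI : Inhabited {x : S // ¬ x = m} := Classical.inhabited_of_nonempty ‹_›
  haveI hA : Nontrivial (∀ i : {x : S // x = m}, R ⧸ ((i.1 : Ideal R) ^ n)) :=
    Pi.nontrivial
  haveI hB : Nontrivial (∀ i : {x : S // ¬ x = m}, R ⧸ ((i.1 : Ideal R) ^ n)) :=
    Pi.nontrivial
  -- Ideal equivalence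
  let A := (∀ i : {x : S // x = m}, R ⧸ ((i.1 : Ideal R) ^ n))
  let B := (∀ i : {x : S // ¬ x = m}, R ⧸ ((i.1 : Ideal R) ^ n))
  let f : R ≃+* A × B := e.trans e2
  have hbij : Function.Bijective (f : R →+* A × B) := f.bijective
  let eI : Ideal R ≃ Ideal A × Ideal B :=
    (Ideal.relIsoOfBijective _ hbij).toEquiv.symm.trans Ideal.idealProdEquiv.toEquiv
  haveI : Finite (Ideal A × Ideal B) := Finite.of_equiv _ eI
  haveI : Finite (Ideal A) :=
    Finite.of_injective (fun I : Ideal A => ((I, ⊥) : Ideal A × Ideal B))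
      (fun a b hab => (Prod.ext_iff.mp hab).1)
  haveI : Finite (Ideal B) :=
    Finite.of_injective (fun I : Ideal B => ((⊥, I) : Ideal A × Ideal B))
      (fun a b hab => (Prod.ext_iff.mp hab).2)
  haveI : Nontrivial (Ideal A) := ⟨⊥, ⊤, bot_ne_top⟩
  haveI : Nontrivial (Ideal B) := ⟨⊥, ⊤, bot_ne_top⟩
  have hA2 : 1 < Nat.card (Ideal A) := Finite.one_lt_card_iff_nontrivial.mpr inferInstance
  have hB2 : 1 < Nat.card (Ideal B) := Finite.one_lt_card_iff_nontrivial.mpr inferInstance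
  have hcard : Nat.card (Ideal R) = Nat.card (Ideal A) * Nat.card (Ideal B) := by
    rw [Nat.card_congr eI, Nat.card_prod]
  rw [hcard] at hp
  rcases Nat.prime_mul_iff.mp hp with ⟨_, hb1⟩ | ⟨_, ha1⟩
  · omega
  · omega
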